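/- arXiv:math/0511712 — 4 statements merged into one kernel-verified Lean document; each statement's English description precedes it below -/
import Mathlib

section
/- For S-linear endomorphisms φ, φ' of an (H,S)-Hopf module M, one has d^0(φ' ∘ φ) = d^0φ' ∘· d^0φ, where d^0φ = (id_M ⊗ μ_H) ∘ (Δ_M ⊗ id_H) ∘ (φ ⊗ σ_H) ∘ Δ_M and ψ ∘· ψ' = (id_M ⊗ μ_H) ∘ (ψ ⊗ id_H) ∘ ψ' is the composition-type product on Hom_S(M, M ⊗ H). In other words d^0 is multiplicative from (End_S(M), ∘) to (Hom_S(M, M ⊗ H), ∘·). -/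
open TensorProduct

variable (k : Type*) [CommRing k]
variable (H : Type*) [Ring H] [HopfAlgebra k H]
variable {M : Type*} [AddCommGroup M] [Module k M]

/-- The composition-type product `φ ∘· φ' = (id_M ⊗ μ_H) ∘ (φ ⊗ id_H) ∘ φ'` on
`Hom_k(M, M ⊗ H)`. -/
noncomputable def cdot (φ φ' : M →ₗ[k] M ⊗[k] H) : M →ₗ[k] M ⊗[k] H :=
  TensorProduct.map LinearMap.id (LinearMap.mul' k H) ∘ₗ
    (TensorProduct.assoc k M H H).toLinearMap ∘ₗ TensorProduct.map φ LinearMap.id ∘ₗ φ'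

/-- The unit `υ₁ = id_M ⊗ η_H`, i.e. `m ↦ m ⊗ 1`. -/
noncomputable def unit1 : M →ₗ[k] M ⊗[k] H := (TensorProduct.mk k M H).flip 1

variable (S : Type*) [Ring S] [Algebra k S]
variable [Module S M] [IsScalarTower k S M] [SMulCommClass k S M] [SMulCommClass S k M]

/-- The action `M ⊗ S → M`, `m ⊗ s ↦ m·s` (written `s • m` since we use left
`S`-modules to encode the right `S`-modules of the paper). -/
noncomputable def actMS : M ⊗[k] S →ₗ[k] M :=
  TensorProduct.lift (LinearMap.mk₂ k (fun m s => s • m)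
    (fun m₁ m₂ s => smul_add s m₁ m₂)
    (fun c m s => smul_comm s c m)
    (fun m s₁ s₂ => add_smul s₁ s₂ m)
    (fun c m s => smul_assoc c s m))

/-- The componentwise `S ⊗ H`-action on `M ⊗ H`: `(m ⊗ h)·(s ⊗ h') = m·s ⊗ h·h'`. -/
noncomputable def mulMH : (M ⊗[k] H) ⊗[k] (S ⊗[k] H) →ₗ[k] M ⊗[k] H :=
  TensorProduct.map (actMS k S) (LinearMap.mul' k H) ∘ₗ
    (TensorProduct.tensorTensorTensorComm k M H S H).toLinearMap

variable {S}

/-- `d⁰φ = (id_M ⊗ μ_H) ∘ (Δ_M ⊗ id_H) ∘ (φ ⊗ σ_H) ∘ Δ_M`. -/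
noncomputable def d0 (ΔM : M →ₗ[k] M ⊗[k] H) (φ : M →ₗ[k] M) : M →ₗ[k] M ⊗[k] H :=
  TensorProduct.map LinearMap.id (LinearMap.mul' k H) ∘ₗ
    (TensorProduct.assoc k M H H).toLinearMap ∘ₗ
    TensorProduct.map ΔM LinearMap.id ∘ₗ
    TensorProduct.map φ (HopfAlgebra.antipode (R := k)) ∘ₗ ΔM

/-- `d¹φ = (id_M ⊗ η_H) ∘ φ`. -/
noncomputable def d1 (φ : M →ₗ[k] M) : M →ₗ[k] M ⊗[k] H := unit1 k H ∘ₗ φ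

/-! ### Auxiliary machinery -/

/-- Right multiplication by `h` on the second tensor factor. -/
noncomputable def rhoAux (h : H) : M ⊗[k] H →ₗ[k] M ⊗[k] H :=
  TensorProduct.map LinearMap.id (LinearMap.mulRight k h)

lemma rhoAux_tmul (h : H) (m : M) (g : H) :
    rhoAux k H h (m ⊗ₜ[k] g) = m ⊗ₜ[k] (g * h) := by
  simp [rhoAux]

lemma rhoAux_rhoAux (h h' : H) (x : M ⊗[k] H) :
    rhoAux k H h' (rhoAux k H h x) = rhoAux k H (h * h') x := by
  induction x using TensorProduct.induction_on with
  | zero => simp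
  | tmul m g => simp [rhoAux_tmul, mul_assoc]
  | add x y hx hy => simp [map_add, hx, hy]

lemma rhoAux_one (x : M ⊗[k] H) : rhoAux k H (1 : H) x = x := by
  induction x using TensorProduct.induction_on with
  | zero => simp
  | tmul m g => simp [rhoAux_tmul]
  | add x y hx hy => simp [map_add, hx, hy]

/-- The "right-multiplication extension" of `f : M → M ⊗ H` to `M ⊗ H`. -/
noncomputable def BAux (f : M →ₗ[k] M ⊗[k] H) : M ⊗[k] H →ₗ[k] M ⊗[k] H :=
  TensorProduct.map LinearMap.id (LinearMap.mul' k H) ∘ₗ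
    (TensorProduct.assoc k M H H).toLinearMap ∘ₗ TensorProduct.map f LinearMap.id

lemma mu_assoc_tmul (x : M ⊗[k] H) (h : H) :
    TensorProduct.map LinearMap.id (LinearMap.mul' k H)
      ((TensorProduct.assoc k M H H) (x ⊗ₜ[k] h)) = rhoAux k H h x := by
  induction x using TensorProduct.induction_on with
  | zero => simp
  | tmul m g => simp [rhoAux_tmul]
  | add x y hx hy => simp [add_tmul, hx, hy]

lemma BAux_tmul (f : M →ₗ[k] M ⊗[k] H) (m : M) (h : H) :
    BAux k H f (m ⊗ₜ[k] h) = rhoAux k H h (f m) := by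
  simp only [BAux, LinearMap.comp_apply, TensorProduct.map_tmul,
    LinearMap.id_coe, id_eq, LinearEquiv.coe_coe]
  exact mu_assoc_tmul k H (f m) h

lemma BAux_rhoAux (g : M →ₗ[k] M ⊗[k] H) (h : H) (x : M ⊗[k] H) :
    BAux k H g (rhoAux k H h x) = rhoAux k H h (BAux k H g x) := by
  induction x using TensorProduct.induction_on with
  | zero => simp
  | tmul m g' => rw [rhoAux_tmul, BAux_tmul, BAux_tmul, rhoAux_rhoAux]
  | add x y hx hy => simp [map_add, hx, hy]

lemma BAux_comp (g f : M →ₗ[k] M ⊗[k] H) :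
    BAux k H g ∘ₗ BAux k H f = BAux k H (BAux k H g ∘ₗ f) := by
  apply TensorProduct.ext'
  intro m h
  rw [LinearMap.comp_apply, BAux_tmul, BAux_tmul, BAux_rhoAux, LinearMap.comp_apply]

lemma BAux_unit1 (f : M →ₗ[k] M ⊗[k] H) :
    BAux k H f ∘ₗ unit1 k H = f := by
  ext m
  have : unit1 k H m = m ⊗ₜ[k] (1 : H) := rfl
  rw [LinearMap.comp_apply, this, BAux_tmul, rhoAux_one]

lemma cdot_eq_BAux (A A' : M →ₗ[k] M ⊗[k] H) :
    cdot k H A A' = BAux k H A ∘ₗ A' := rfl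

lemma d0_eq_BAux (ΔM : M →ₗ[k] M ⊗[k] H) (ψ : M →ₗ[k] M) :
    d0 k H ΔM ψ = BAux k H (ΔM ∘ₗ ψ) ∘ₗ
      TensorProduct.map LinearMap.id (HopfAlgebra.antipode (R := k)) ∘ₗ ΔM := by
  have h : TensorProduct.map ΔM LinearMap.id ∘ₗ
        TensorProduct.map ψ (HopfAlgebra.antipode (R := k) (A := H)) =
      TensorProduct.map (ΔM ∘ₗ ψ) LinearMap.id ∘ₗ
        TensorProduct.map LinearMap.id (HopfAlgebra.antipode (R := k)) := by
    rw [← TensorProduct.map_comp, ← TensorProduct.map_comp]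
    simp
  refine LinearMap.ext fun m => ?_
  simp only [d0, BAux, LinearMap.comp_apply]
  rw [← LinearMap.comp_apply (TensorProduct.map ΔM LinearMap.id), h]
  rfl

lemma map_id_algebraMap_eq (z : M ⊗[k] k) :
    TensorProduct.map LinearMap.id (Algebra.linearMap k H) z =
      (TensorProduct.rid k M z) ⊗ₜ[k] (1 : H) := by
  induction z using TensorProduct.induction_on with
  | zero => simp
  | tmul m c =>
    simp [Algebra.linearMap_apply, Algebra.algebraMap_eq_smul_one, tmul_smul, smul_tmul']
  | add x y hx hy => simp [map_add, hx, hy, add_tmul]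

/-- The collapse lemma: `Σ m₀₀ ⊗ σ(m₀₁)·m₁ = m ⊗ 1`. -/
lemma collapse (ΔM : M →ₗ[k] M ⊗[k] H)
    (hMcounit : (TensorProduct.rid k M).toLinearMap ∘ₗ
      TensorProduct.map LinearMap.id (Coalgebra.counit (R := k)) ∘ₗ ΔM = LinearMap.id)
    (hMcoassoc : (TensorProduct.assoc k M H H).toLinearMap ∘ₗ
        TensorProduct.map ΔM LinearMap.id ∘ₗ ΔM =
      TensorProduct.map LinearMap.id (Coalgebra.comul (R := k)) ∘ₗ ΔM) :
    BAux k H (TensorProduct.map LinearMap.id (HopfAlgebra.antipode (R := k)) ∘ₗ ΔM) ∘ₗ ΔM =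
      unit1 k H := by
  refine LinearMap.ext fun m => ?_
  simp only [BAux, LinearMap.comp_apply, LinearEquiv.coe_coe]
  have h1 : TensorProduct.map
        (TensorProduct.map LinearMap.id (HopfAlgebra.antipode (R := k) (A := H)) ∘ₗ ΔM)
        (LinearMap.id (M := H)) (ΔM m) =
      TensorProduct.map (TensorProduct.map LinearMap.id (HopfAlgebra.antipode (R := k)))
        LinearMap.id (TensorProduct.map ΔM LinearMap.id (ΔM m)) := by
    have e : TensorProduct.map
          (TensorProduct.map LinearMap.id (HopfAlgebra.antipode (R := k) (A := H)) ∘ₗ ΔM)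
          (LinearMap.id (M := H)) =
        TensorProduct.map (TensorProduct.map LinearMap.id (HopfAlgebra.antipode (R := k)))
          LinearMap.id ∘ₗ TensorProduct.map ΔM LinearMap.id := by
      rw [← TensorProduct.map_comp, LinearMap.id_comp]
    rw [e]; rfl
  rw [h1]
  have h2 : (TensorProduct.assoc k M H H)
        (TensorProduct.map (TensorProduct.map LinearMap.id
            (HopfAlgebra.antipode (R := k) (A := H))) LinearMap.id
          (TensorProduct.map ΔM LinearMap.id (ΔM m))) =
      TensorProduct.map LinearMap.id
        (TensorProduct.map (HopfAlgebra.antipode (R := k)) LinearMap.id)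
        ((TensorProduct.assoc k M H H) (TensorProduct.map ΔM LinearMap.id (ΔM m))) := by
    exact (TensorProduct.map_map_assoc LinearMap.id
      (HopfAlgebra.antipode (R := k)) LinearMap.id _).symm
  rw [h2]
  have h3 : (TensorProduct.assoc k M H H) (TensorProduct.map ΔM LinearMap.id (ΔM m)) =
      TensorProduct.map LinearMap.id (Coalgebra.comul (R := k)) (ΔM m) := by
    have := LinearMap.congr_fun hMcoassoc m
    simpa using this
  rw [h3]
  have h4 : TensorProduct.map (LinearMap.id (M := M)) (LinearMap.mul' k H)
        (TensorProduct.map LinearMap.id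
          (TensorProduct.map (HopfAlgebra.antipode (R := k)) LinearMap.id)
          (TensorProduct.map LinearMap.id (Coalgebra.comul (R := k)) (ΔM m))) =
      TensorProduct.map LinearMap.id
        (LinearMap.mul' k H ∘ₗ
          TensorProduct.map (HopfAlgebra.antipode (R := k)) LinearMap.id ∘ₗ
          Coalgebra.comul (R := k)) (ΔM m) := by
    have e : TensorProduct.map (LinearMap.id (M := M)) (LinearMap.mul' k H) ∘ₗ
          TensorProduct.map LinearMap.id
            (TensorProduct.map (HopfAlgebra.antipode (R := k)) LinearMap.id) ∘ₗ
          TensorProduct.map (LinearMap.id (M := M)) (Coalgebra.comul (R := k)) =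
        TensorProduct.map LinearMap.id
          (LinearMap.mul' k H ∘ₗ
            TensorProduct.map (HopfAlgebra.antipode (R := k)) LinearMap.id ∘ₗ
            Coalgebra.comul (R := k)) := by
      rw [← TensorProduct.map_comp, ← TensorProduct.map_comp, LinearMap.id_comp,
        LinearMap.id_comp]
    rw [← e]; rfl
  rw [h4]
  have h5 : (LinearMap.mul' k H ∘ₗ
        TensorProduct.map (HopfAlgebra.antipode (R := k)) LinearMap.id ∘ₗ
        Coalgebra.comul (R := k)) =
      (Algebra.linearMap k H ∘ₗ Coalgebra.counit (R := k)) := by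
    have := HopfAlgebra.mul_antipode_rTensor_comul (R := k) (A := H)
    rw [← this]
    rfl
  rw [h5]
  have h6 : TensorProduct.map (LinearMap.id (M := M))
        (Algebra.linearMap k H ∘ₗ Coalgebra.counit (R := k)) (ΔM m) =
      TensorProduct.map LinearMap.id (Algebra.linearMap k H)
        (TensorProduct.map LinearMap.id (Coalgebra.counit (R := k)) (ΔM m)) := by
    have e : TensorProduct.map (LinearMap.id (M := M))
          (Algebra.linearMap k H ∘ₗ Coalgebra.counit (R := k)) =
        TensorProduct.map (LinearMap.id (M := M)) (Algebra.linearMap k H) ∘ₗ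
          TensorProduct.map (LinearMap.id (M := M)) (Coalgebra.counit (R := k) (A := H)) := by
      rw [← TensorProduct.map_comp, LinearMap.id_comp]
    rw [e]; rfl
  rw [h6, map_id_algebraMap_eq]
  have h7 : (TensorProduct.rid k M)
      (TensorProduct.map LinearMap.id (Coalgebra.counit (R := k)) (ΔM m)) = m := by
    have := LinearMap.congr_fun hMcounit m
    simpa using this
  rw [h7]
  rfl

/-- Key lemma: `d⁰φ' ∘· Δ_M = Δ_M ∘ φ'`. -/
lemma cdot_d0_coaction (ΔM : M →ₗ[k] M ⊗[k] H)
    (hMcounit : (TensorProduct.rid k M).toLinearMap ∘ₗ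
      TensorProduct.map LinearMap.id (Coalgebra.counit (R := k)) ∘ₗ ΔM = LinearMap.id)
    (hMcoassoc : (TensorProduct.assoc k M H H).toLinearMap ∘ₗ
        TensorProduct.map ΔM LinearMap.id ∘ₗ ΔM =
      TensorProduct.map LinearMap.id (Coalgebra.comul (R := k)) ∘ₗ ΔM)
    (φ' : M →ₗ[k] M) :
    cdot k H (d0 k H ΔM φ') ΔM = ΔM ∘ₗ φ' := by
  rw [cdot_eq_BAux, d0_eq_BAux]
  have : BAux k H (BAux k H (ΔM ∘ₗ φ') ∘ₗ
        TensorProduct.map LinearMap.id (HopfAlgebra.antipode (R := k)) ∘ₗ ΔM) =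
      BAux k H (ΔM ∘ₗ φ') ∘ₗ
        BAux k H (TensorProduct.map LinearMap.id (HopfAlgebra.antipode (R := k)) ∘ₗ ΔM) := by
    rw [BAux_comp]
  rw [this]
  rw [LinearMap.comp_assoc]
  rw [collapse k H ΔM hMcounit hMcoassoc]
  exact BAux_unit1 k H (ΔM ∘ₗ φ')

/-- `d⁰` is multiplicative: `d⁰(φ' ∘ φ) = d⁰φ' ∘· d⁰φ` for `S`-linear
endomorphisms of an `(H,S)`-Hopf module. -/
theorem d0_multiplicative
    (ΔS : S →ₐ[k] S ⊗[k] H)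
    (hScounit : ∀ s : S, (TensorProduct.rid k S)
      ((TensorProduct.map LinearMap.id (Coalgebra.counit (R := k))) (ΔS s)) = s)
    (hScoassoc : ∀ s : S, (TensorProduct.assoc k S H H)
        ((TensorProduct.map ΔS.toLinearMap LinearMap.id) (ΔS s)) =
      (TensorProduct.map LinearMap.id (Coalgebra.comul (R := k))) (ΔS s))
    (ΔM : M →ₗ[k] M ⊗[k] H)
    (hMcounit : (TensorProduct.rid k M).toLinearMap ∘ₗ
      TensorProduct.map LinearMap.id (Coalgebra.counit (R := k)) ∘ₗ ΔM = LinearMap.id)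
    (hMcoassoc : (TensorProduct.assoc k M H H).toLinearMap ∘ₗ
        TensorProduct.map ΔM LinearMap.id ∘ₗ ΔM =
      TensorProduct.map LinearMap.id (Coalgebra.comul (R := k)) ∘ₗ ΔM)
    (hHopfM : ∀ (s : S) (m : M), ΔM (s • m) = mulMH k H S (ΔM m ⊗ₜ[k] ΔS s))
    (φ φ' : M →ₗ[k] M)
    (hφ : ∀ (s : S) (m : M), φ (s • m) = s • φ m)
    (hφ' : ∀ (s : S) (m : M), φ' (s • m) = s • φ' m) :
    d0 k H ΔM (φ' ∘ₗ φ) = cdot k H (d0 k H ΔM φ') (d0 k H ΔM φ) := by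
  have h1 : BAux k H (d0 k H ΔM φ') ∘ₗ BAux k H (ΔM ∘ₗ φ) =
      BAux k H (ΔM ∘ₗ (φ' ∘ₗ φ)) := by
    rw [BAux_comp]
    congr 1
    have hkey := cdot_d0_coaction k H ΔM hMcounit hMcoassoc φ'
    rw [cdot_eq_BAux] at hkey
    rw [← LinearMap.comp_assoc, hkey, LinearMap.comp_assoc]
  rw [cdot_eq_BAux, d0_eq_BAux k H ΔM φ, ← LinearMap.comp_assoc, h1,
    d0_eq_BAux k H ΔM (φ' ∘ₗ φ)]
end

section
/- The maps d^0, d^1 : Hom_S(M,M) → Hom_S(M, M⊗H) and d^0, d^1, d^2 : Hom_S(M, M⊗H) → Hom_S(M, M⊗H⊗H) defined in the paper satisfy the precosimplicial identities d^1 ∘ d^0 = d^0 ∘ d^0, d^2 ∘ d^0 = d^0 ∘ d^1, and d^2 ∘ d^1 = d^1 ∘ d^1. -/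
open TensorProduct

variable (k : Type*) [CommRing k]
variable (H : Type*) [Ring H] [HopfAlgebra k H]
variable {M : Type*} [AddCommGroup M] [Module k M]

variable (S : Type*) [Ring S] [Algebra k S]
variable [Module S M] [IsScalarTower k S M] [SMulCommClass k S M] [SMulCommClass S k M]

variable {S}

/-- `d⁰Φ = (id_M ⊗ μ_H ⊗ id_H) ∘ (Δ_M ⊗ T) ∘ (Φ ⊗ σ_H) ∘ Δ_M`, with `T` the flip of
`H ⊗ H`, taking values in `(M ⊗ H) ⊗ H`. -/
noncomputable def D0 (ΔM : M →ₗ[k] M ⊗[k] H) (Φ : M →ₗ[k] M ⊗[k] H) :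
    M →ₗ[k] (M ⊗[k] H) ⊗[k] H :=
  TensorProduct.map
      (TensorProduct.map LinearMap.id (LinearMap.mul' k H) ∘ₗ
        (TensorProduct.assoc k M H H).toLinearMap) LinearMap.id ∘ₗ
    (TensorProduct.assoc k (M ⊗[k] H) H H).symm.toLinearMap ∘ₗ
    TensorProduct.map ΔM (TensorProduct.comm k H H).toLinearMap ∘ₗ
    (TensorProduct.assoc k M H H).toLinearMap ∘ₗ
    TensorProduct.map Φ (HopfAlgebra.antipode (R := k)) ∘ₗ ΔM

/-- `d¹Φ = (id_M ⊗ Δ_H) ∘ Φ`. -/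
noncomputable def D1 (Φ : M →ₗ[k] M ⊗[k] H) : M →ₗ[k] (M ⊗[k] H) ⊗[k] H :=
  (TensorProduct.assoc k M H H).symm.toLinearMap ∘ₗ
    TensorProduct.map LinearMap.id (Coalgebra.comul (R := k)) ∘ₗ Φ

/-- `d²Φ = Φ ⊗ η_H`. -/
noncomputable def D2 (Φ : M →ₗ[k] M ⊗[k] H) : M →ₗ[k] (M ⊗[k] H) ⊗[k] H :=
  (TensorProduct.mk k (M ⊗[k] H) H).flip 1 ∘ₗ Φ

/-- The product `Ψ ∘· Ψ' = (id_M ⊗ μ_H^{⊗2}) ∘ (id_M ⊗ χ₂) ∘ (Ψ ⊗ id_{H⊗H}) ∘ Ψ'` on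
`Hom_k(M, (M ⊗ H) ⊗ H)`, where `χ₂((a₁⊗a₂)⊗(b₁⊗b₂)) = (a₁⊗b₁)⊗(a₂⊗b₂)`. -/
noncomputable def cdot2 (Ψ Ψ' : M →ₗ[k] (M ⊗[k] H) ⊗[k] H) :
    M →ₗ[k] (M ⊗[k] H) ⊗[k] H :=
  TensorProduct.map
      (TensorProduct.map LinearMap.id (LinearMap.mul' k H) ∘ₗ
        (TensorProduct.assoc k M H H).toLinearMap) (LinearMap.mul' k H) ∘ₗ
    (TensorProduct.tensorTensorTensorComm k (M ⊗[k] H) H H H).toLinearMap ∘ₗ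
    (TensorProduct.assoc k ((M ⊗[k] H) ⊗[k] H) H H).toLinearMap ∘ₗ
    TensorProduct.map (TensorProduct.map Ψ LinearMap.id) LinearMap.id ∘ₗ Ψ'


namespace HopfProofAux


variable {R : Type*} [CommRing R] {A : Type*} [Ring A] [HopfAlgebra R A]

local notation "σ" => (HopfAlgebra.antipode (R := R) (A := A))
local notation "Δ" => (Coalgebra.comul (R := R) (A := A))
local notation "ε" => (Coalgebra.counit (R := R) (A := A))
local notation "μ" => (LinearMap.mul' R A)
local notation "μ₂" => (LinearMap.mul' R (A ⊗[R] A))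

/-- Convolution product on `Hom(A, A ⊗ A)`. -/
noncomputable def conv (f g : A →ₗ[R] A ⊗[R] A) : A →ₗ[R] A ⊗[R] A :=
  μ₂ ∘ₗ TensorProduct.map f g ∘ₗ Δ

/-- Convolution unit. -/
noncomputable def cunit : A →ₗ[R] A ⊗[R] A :=
  Algebra.linearMap R (A ⊗[R] A) ∘ₗ ε

section maps
variable {R₀ : Type*} [CommSemiring R₀]
variable {M₁ M₂ M₃ N₁ N₂ N₃ : Type*}
  [AddCommMonoid M₁] [AddCommMonoid M₂] [AddCommMonoid M₃]
  [AddCommMonoid N₁] [AddCommMonoid N₂] [AddCommMonoid N₃]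
  [Module R₀ M₁] [Module R₀ M₂] [Module R₀ M₃] [Module R₀ N₁] [Module R₀ N₂] [Module R₀ N₃]

lemma mapL (f₁ : M₁ →ₗ[R₀] M₂) (f₂ : M₂ →ₗ[R₀] M₃) (g : N₁ →ₗ[R₀] N₂) :
    TensorProduct.map (f₂ ∘ₗ f₁) g
      = TensorProduct.map f₂ g ∘ₗ TensorProduct.map f₁ LinearMap.id := by
  rw [← TensorProduct.map_comp, LinearMap.comp_id]

lemma mapL' (f₁ : M₁ →ₗ[R₀] M₂) (f₂ : M₂ →ₗ[R₀] M₃) (g : N₁ →ₗ[R₀] N₂) :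
    TensorProduct.map (f₂ ∘ₗ f₁) g
      = TensorProduct.map f₂ LinearMap.id ∘ₗ TensorProduct.map f₁ g := by
  rw [← TensorProduct.map_comp, LinearMap.id_comp]

lemma mapR (f : M₁ →ₗ[R₀] M₂) (g₁ : N₁ →ₗ[R₀] N₂) (g₂ : N₂ →ₗ[R₀] N₃) :
    TensorProduct.map f (g₂ ∘ₗ g₁)
      = TensorProduct.map LinearMap.id g₂ ∘ₗ TensorProduct.map f g₁ := by
  rw [← TensorProduct.map_comp, LinearMap.id_comp]

lemma mapR' (f : M₁ →ₗ[R₀] M₂) (g₁ : N₁ →ₗ[R₀] N₂) (g₂ : N₂ →ₗ[R₀] N₃) :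
    TensorProduct.map f (g₂ ∘ₗ g₁)
      = TensorProduct.map f g₂ ∘ₗ TensorProduct.map LinearMap.id g₁ := by
  rw [← TensorProduct.map_comp, LinearMap.comp_id]

lemma mapF (f : M₁ →ₗ[R₀] M₂) (g : N₁ →ₗ[R₀] N₂) :
    TensorProduct.map f LinearMap.id ∘ₗ TensorProduct.map LinearMap.id g
      = TensorProduct.map f g := by
  rw [← TensorProduct.map_comp, LinearMap.comp_id, LinearMap.id_comp]

lemma mapF' (f : M₁ →ₗ[R₀] M₂) (g : N₁ →ₗ[R₀] N₂) :
    TensorProduct.map LinearMap.id g ∘ₗ TensorProduct.map f LinearMap.id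
      = TensorProduct.map f g := by
  rw [← TensorProduct.map_comp, LinearMap.comp_id, LinearMap.id_comp]

end maps

/-- Pointwise coassociativity of `A`, in `map` form. -/
lemma coassoc_pt (a : A) :
    TensorProduct.map LinearMap.id Δ (Δ a)
      = TensorProduct.assoc R A A A (TensorProduct.map Δ LinearMap.id (Δ a)) := by
  have h := Coalgebra.coassoc_apply (R := R) a
  simpa [LinearMap.rTensor, LinearMap.lTensor] using h.symm

lemma coassoc_pt' (a : A) :
    TensorProduct.map Δ LinearMap.id (Δ a)
      = (TensorProduct.assoc R A A A).symm (TensorProduct.map LinearMap.id Δ (Δ a)) := by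
  rw [coassoc_pt a, LinearEquiv.symm_apply_apply]

set_option synthInstance.maxHeartbeats 400000 in
lemma conv_assoc (p q r : A →ₗ[R] A ⊗[R] A) :
    conv (conv p q) r = conv p (conv q r) := by
  ext h
  simp only [conv, LinearMap.comp_apply]
  rw [show ((μ₂ ∘ₗ TensorProduct.map p q ∘ₗ Δ : A →ₗ[R] A ⊗[R] A))
        = (μ₂ ∘ₗ TensorProduct.map p q) ∘ₗ Δ from rfl,
      mapL, show ((μ₂ ∘ₗ TensorProduct.map q r ∘ₗ Δ : A →ₗ[R] A ⊗[R] A))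
        = (μ₂ ∘ₗ TensorProduct.map q r) ∘ₗ Δ from rfl, mapR]
  simp only [LinearMap.comp_apply]
  rw [coassoc_pt' h, ← mapF p Δ]
  simp only [LinearMap.comp_apply]
  induction (TensorProduct.map LinearMap.id Δ (Δ h)) using TensorProduct.induction_on with
  | zero => simp
  | tmul x w =>
    induction w using TensorProduct.induction_on with
    | zero => simp [tmul_zero]
    | tmul s t =>
      simp [LinearMap.mul'_apply, mul_assoc]
    | add w₁ w₂ ih₁ ih₂ =>
      simp only [tmul_add, map_add, ih₁, ih₂]
  | add z₁ z₂ ih₁ ih₂ => simp only [map_add, ih₁, ih₂]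


lemma cunit_conv (f : A →ₗ[R] A ⊗[R] A) : conv cunit f = f := by
  ext h
  simp only [conv, cunit, LinearMap.comp_apply]
  rw [mapL]
  simp only [LinearMap.comp_apply]
  have h1 : TensorProduct.map ε LinearMap.id (Δ h) = (1 : R) ⊗ₜ[R] h := by
    simpa [LinearMap.rTensor] using Coalgebra.rTensor_counit_comul (R := R) h
  rw [h1]
  simp [LinearMap.mul'_apply, ← Algebra.TensorProduct.one_def]

lemma conv_cunit (f : A →ₗ[R] A ⊗[R] A) : conv f cunit = f := by
  ext h
  simp only [conv, cunit, LinearMap.comp_apply]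
  rw [mapR]
  simp only [LinearMap.comp_apply]
  rw [← mapF f ε]
  simp only [LinearMap.comp_apply]
  have h1 : TensorProduct.map LinearMap.id ε (Δ h) = h ⊗ₜ[R] (1 : R) := by
    simpa [LinearMap.lTensor] using Coalgebra.lTensor_counit_comul (R := R) h
  rw [h1]
  simp [LinearMap.mul'_apply, ← Algebra.TensorProduct.one_def]

lemma mul_map_comul (z : A ⊗[R] A) :
    μ₂ (TensorProduct.map Δ Δ z) = Δ (μ z) := by
  induction z using TensorProduct.induction_on with
  | zero => simp
  | tmul a b => simp [LinearMap.mul'_apply]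
  | add x y hx hy => simp only [map_add, hx, hy]

lemma comul_conv_antipode : conv Δ (Δ ∘ₗ σ) = cunit := by
  ext h
  simp only [conv, cunit, LinearMap.comp_apply]
  rw [show TensorProduct.map Δ (Δ ∘ₗ σ)
        = TensorProduct.map Δ Δ ∘ₗ TensorProduct.map LinearMap.id σ by
      rw [← TensorProduct.map_comp, LinearMap.comp_id]]
  simp only [LinearMap.comp_apply]
  rw [mul_map_comul]
  have h1 : μ (TensorProduct.map LinearMap.id σ (Δ h))
      = algebraMap R A (ε h) := by
    simpa [LinearMap.lTensor] using HopfAlgebra.mul_antipode_lTensor_comul_apply (R := R) h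
  rw [h1]
  simp [Algebra.algebraMap_eq_smul_one, Algebra.TensorProduct.one_def]


lemma coassoc_map : (TensorProduct.map Δ LinearMap.id) ∘ₗ Δ
    = (TensorProduct.assoc R A A A).symm.toLinearMap ∘ₗ (TensorProduct.map LinearMap.id Δ) ∘ₗ Δ := by
  ext a
  simp only [LinearMap.comp_apply, LinearEquiv.coe_coe]
  exact coassoc_pt' a

set_option maxHeartbeats 1000000 in
set_option synthInstance.maxHeartbeats 400000 in
lemma anti_conv_comul :
    conv ((TensorProduct.comm R A A).toLinearMap ∘ₗ TensorProduct.map σ σ ∘ₗ Δ) Δ = cunit := by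
  ext h
  simp only [conv, cunit, LinearMap.comp_apply]
  rw [show TensorProduct.map ((TensorProduct.comm R A A).toLinearMap ∘ₗ TensorProduct.map σ σ ∘ₗ Δ) Δ
        = TensorProduct.map ((TensorProduct.comm R A A).toLinearMap ∘ₗ TensorProduct.map σ σ) LinearMap.id
            ∘ₗ TensorProduct.map Δ Δ by
      rw [← TensorProduct.map_comp, LinearMap.id_comp, LinearMap.comp_assoc]]
  simp only [LinearMap.comp_apply]
  rw [← mapF Δ Δ]
  simp only [LinearMap.comp_apply]
  rw [coassoc_pt h]
  have C3 : ∀ t : (A ⊗[R] A) ⊗[R] A,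
      TensorProduct.map Δ LinearMap.id (TensorProduct.assoc R A A A t)
        = TensorProduct.assoc R (A ⊗[R] A) A A
            (TensorProduct.map (TensorProduct.map Δ LinearMap.id) LinearMap.id t) := by
    intro t
    induction t using TensorProduct.induction_on with
    | zero => simp
    | tmul xy z =>
        induction xy using TensorProduct.induction_on with
        | zero => simp [zero_tmul]
        | tmul x y => simp
        | add a b iha ihb => simp [add_tmul, iha, ihb]
    | add a b iha ihb => simp [iha, ihb]
  rw [C3]
  rw [show TensorProduct.map (TensorProduct.map Δ LinearMap.id) LinearMap.id
        ((TensorProduct.map Δ LinearMap.id) (Δ h))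
      = (TensorProduct.map (TensorProduct.map Δ LinearMap.id) LinearMap.id
          ∘ₗ TensorProduct.map Δ LinearMap.id) (Δ h) from rfl]
  rw [show TensorProduct.map (TensorProduct.map Δ LinearMap.id) LinearMap.id
          ∘ₗ TensorProduct.map Δ LinearMap.id
        = TensorProduct.map (TensorProduct.assoc R A A A).symm.toLinearMap LinearMap.id
            ∘ₗ TensorProduct.map (TensorProduct.map LinearMap.id Δ) LinearMap.id
            ∘ₗ TensorProduct.map Δ LinearMap.id by
      rw [← TensorProduct.map_comp, LinearMap.comp_id, coassoc_map, mapL, mapL]]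
  simp only [LinearMap.comp_apply]
  have C5 : ∀ (u y : A) (w : A ⊗[R] A),
      (LinearMap.mul' R (A ⊗[R] A))
        (TensorProduct.map ((TensorProduct.comm R A A).toLinearMap ∘ₗ TensorProduct.map σ σ) LinearMap.id
          (TensorProduct.assoc R (A ⊗[R] A) A A
            (((TensorProduct.assoc R A A A).symm (u ⊗ₜ[R] w)) ⊗ₜ[R] y)))
        = (μ (TensorProduct.map σ LinearMap.id w)) ⊗ₜ[R] (σ u * y) := by
    intro u y w
    induction w using TensorProduct.induction_on with
    | zero => simp [tmul_zero, zero_tmul]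
    | tmul p q =>
        simp [LinearMap.mul'_apply, Algebra.TensorProduct.tmul_mul_tmul]
    | add a b iha ihb =>
        simp only [tmul_add, map_add, add_tmul, iha, ihb, add_mul]
  have C6 : ∀ (y : A) (w : A ⊗[R] A),
      (LinearMap.mul' R (A ⊗[R] A))
        (TensorProduct.map ((TensorProduct.comm R A A).toLinearMap ∘ₗ TensorProduct.map σ σ) LinearMap.id
          (TensorProduct.assoc R (A ⊗[R] A) A A
            (((TensorProduct.assoc R A A A).symm ((TensorProduct.map LinearMap.id Δ) w)) ⊗ₜ[R] y)))
        = (1 : A) ⊗ₜ[R] (σ ((TensorProduct.rid R A) (TensorProduct.map LinearMap.id ε w)) * y) := by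
    intro y w
    induction w using TensorProduct.induction_on with
    | zero => simp [zero_tmul]
    | tmul u v =>
        simp only [map_tmul, LinearMap.id_coe, id_eq]
        rw [C5 u y (Δ v)]
        have hv : μ (TensorProduct.map σ LinearMap.id (Δ v)) = algebraMap R A (ε v) := by
          simpa [LinearMap.rTensor] using HopfAlgebra.mul_antipode_rTensor_comul_apply (R := R) v
        rw [hv]
        simp only [TensorProduct.rid_tmul, map_smul, smul_mul_assoc,
          Algebra.algebraMap_eq_smul_one, tmul_smul, TensorProduct.smul_tmul']
    | add a b iha ihb =>
        simp only [map_add, add_tmul, iha, ihb, tmul_add, add_mul]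
  have GG : ∀ z : A ⊗[R] A,
      (LinearMap.mul' R (A ⊗[R] A))
        (TensorProduct.map ((TensorProduct.comm R A A).toLinearMap ∘ₗ TensorProduct.map σ σ) LinearMap.id
          (TensorProduct.assoc R (A ⊗[R] A) A A
            (TensorProduct.map (TensorProduct.assoc R A A A).symm.toLinearMap LinearMap.id
              (TensorProduct.map (TensorProduct.map LinearMap.id Δ) LinearMap.id
                (TensorProduct.map Δ LinearMap.id z)))))
        = (1 : A) ⊗ₜ[R] (μ (TensorProduct.map σ LinearMap.id z)) := by
    intro z
    induction z using TensorProduct.induction_on with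
    | zero => simp
    | tmul x y =>
        simp only [map_tmul, LinearMap.id_coe, id_eq, LinearEquiv.coe_coe]
        rw [C6 y (Δ x)]
        have hx : TensorProduct.map LinearMap.id ε (Δ x) = x ⊗ₜ[R] (1 : R) := by
          simpa [LinearMap.lTensor] using Coalgebra.lTensor_counit_comul (R := R) x
        rw [hx]
        simp [LinearMap.mul'_apply, TensorProduct.rid_tmul]
    | add a b iha ihb => simp only [map_add, iha, ihb, tmul_add]
  rw [GG (Δ h)]
  have hh : μ (TensorProduct.map σ LinearMap.id (Δ h)) = algebraMap R A (ε h) := by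
    simpa [LinearMap.rTensor] using HopfAlgebra.mul_antipode_rTensor_comul_apply (R := R) h
  rw [hh]
  simp only [Algebra.linearMap_apply, Algebra.TensorProduct.algebraMap_apply,
    Algebra.algebraMap_eq_smul_one, tmul_smul, TensorProduct.smul_tmul',
    Algebra.TensorProduct.one_def]

/-- The antipode is an anti-coalgebra morphism. -/
lemma comul_antipode_map :
    Δ ∘ₗ σ = (TensorProduct.comm R A A).toLinearMap ∘ₗ TensorProduct.map σ σ ∘ₗ Δ := by
  have h1 := comul_conv_antipode (R := R) (A := A)
  have h2 := anti_conv_comul (R := R) (A := A)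
  calc Δ ∘ₗ σ = conv cunit (Δ ∘ₗ σ) := (cunit_conv _).symm
    _ = conv (conv ((TensorProduct.comm R A A).toLinearMap ∘ₗ TensorProduct.map σ σ ∘ₗ Δ) Δ) (Δ ∘ₗ σ) := by
        rw [h2]
    _ = conv ((TensorProduct.comm R A A).toLinearMap ∘ₗ TensorProduct.map σ σ ∘ₗ Δ) (conv Δ (Δ ∘ₗ σ)) :=
        conv_assoc _ _ _
    _ = conv ((TensorProduct.comm R A A).toLinearMap ∘ₗ TensorProduct.map σ σ ∘ₗ Δ) cunit := by
        rw [h1]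
    _ = (TensorProduct.comm R A A).toLinearMap ∘ₗ TensorProduct.map σ σ ∘ₗ Δ := conv_cunit _

lemma comul_antipode_apply (a : A) :
    Δ (σ a) = TensorProduct.comm R A A (TensorProduct.map σ σ (Δ a)) :=
  by simpa using LinearMap.congr_fun (comul_antipode_map (R := R) (A := A)) a

end HopfProofAux

section ModuleAux

local notation "σH" => (HopfAlgebra.antipode (R := k) (A := H))
local notation "ΔH" => (Coalgebra.comul (R := k) (A := H))
local notation "μH" => (LinearMap.mul' k H)

/-- The common shuffle map. -/
private noncomputable def VV : ((M ⊗[k] H) ⊗[k] H) ⊗[k] (H ⊗[k] H) →ₗ[k] (M ⊗[k] H) ⊗[k] H :=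
  TensorProduct.map
      (TensorProduct.map LinearMap.id (LinearMap.mul' k H) ∘ₗ
        (TensorProduct.assoc k M H H).toLinearMap) (LinearMap.mul' k H) ∘ₗ
    (TensorProduct.tensorTensorTensorComm k (M ⊗[k] H) H H H).toLinearMap ∘ₗ
    TensorProduct.map LinearMap.id
      (TensorProduct.map (HopfAlgebra.antipode (R := k)) (HopfAlgebra.antipode (R := k)) ∘ₗ
        (TensorProduct.comm k H H).toLinearMap)

set_option maxHeartbeats 1000000 in
set_option synthInstance.maxHeartbeats 400000 in
private lemma lemL1 (ΔM : M →ₗ[k] M ⊗[k] H) (φ : M →ₗ[k] M) :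
    (TensorProduct.assoc k M H H).symm.toLinearMap ∘ₗ
      TensorProduct.map LinearMap.id ΔH ∘ₗ
      TensorProduct.map LinearMap.id μH ∘ₗ
      (TensorProduct.assoc k M H H).toLinearMap ∘ₗ
      TensorProduct.map ΔM LinearMap.id ∘ₗ
      TensorProduct.map φ σH
    = VV k H ∘ₗ
      TensorProduct.map (TensorProduct.assoc k M H H).symm.toLinearMap LinearMap.id ∘ₗ
      TensorProduct.map (TensorProduct.map LinearMap.id ΔH ∘ₗ ΔM ∘ₗ φ) ΔH := by
  apply TensorProduct.ext'
  intro x h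
  simp only [VV, LinearMap.comp_apply, TensorProduct.map_tmul, LinearMap.id_coe, id_eq,
    LinearEquiv.coe_coe]
  induction (ΔM (φ x)) using TensorProduct.induction_on with
  | zero => simp
  | tmul n a =>
      simp only [TensorProduct.assoc_tmul, TensorProduct.map_tmul, LinearMap.id_coe, id_eq,
        LinearMap.mul'_apply, Bialgebra.comul_mul, LinearEquiv.coe_coe]
      rw [HopfProofAux.comul_antipode_apply (R := k) (A := H) h]
      induction (ΔH a) using TensorProduct.induction_on with
      | zero => simp [TensorProduct.tmul_zero, TensorProduct.zero_tmul]
      | tmul a₁ a₂ =>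
          induction (ΔH h) using TensorProduct.induction_on with
          | zero => simp [TensorProduct.tmul_zero, TensorProduct.zero_tmul]
          | tmul h₁ h₂ =>
              simp [Algebra.TensorProduct.tmul_mul_tmul, LinearMap.mul'_apply]
          | add q₁ q₂ ih₁ ih₂ =>
              simp only [map_add, TensorProduct.tmul_add, TensorProduct.add_tmul, mul_add,
                ih₁, ih₂]
      | add p₁ p₂ ih₁ ih₂ =>
          simp only [map_add, TensorProduct.tmul_add, TensorProduct.add_tmul, add_mul,
            ih₁, ih₂]
  | add w₁ w₂ ih₁ ih₂ =>
      simp only [map_add, TensorProduct.tmul_add, TensorProduct.add_tmul, ih₁, ih₂]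

set_option maxHeartbeats 1000000 in
set_option synthInstance.maxHeartbeats 400000 in
private lemma lemL2 (ΔM : M →ₗ[k] M ⊗[k] H) (φ : M →ₗ[k] M) :
    TensorProduct.map
        (TensorProduct.map LinearMap.id μH ∘ₗ (TensorProduct.assoc k M H H).toLinearMap)
        LinearMap.id ∘ₗ
      (TensorProduct.assoc k (M ⊗[k] H) H H).symm.toLinearMap ∘ₗ
      TensorProduct.map ΔM (TensorProduct.comm k H H).toLinearMap ∘ₗ
      (TensorProduct.assoc k M H H).toLinearMap ∘ₗ
      TensorProduct.map
        (TensorProduct.map LinearMap.id μH ∘ₗ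
          (TensorProduct.assoc k M H H).toLinearMap ∘ₗ
          TensorProduct.map ΔM LinearMap.id ∘ₗ
          TensorProduct.map φ σH) σH
    = VV k H ∘ₗ
      TensorProduct.map (TensorProduct.map ΔM LinearMap.id ∘ₗ ΔM ∘ₗ φ) LinearMap.id ∘ₗ
      (TensorProduct.assoc k M H H).toLinearMap := by
  apply TensorProduct.ext_threefold
  intro x h₁ h₂
  simp only [VV, LinearMap.comp_apply, TensorProduct.map_tmul, LinearMap.id_coe, id_eq,
    LinearEquiv.coe_coe, TensorProduct.assoc_tmul]
  induction (ΔM (φ x)) using TensorProduct.induction_on with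
  | zero => simp
  | tmul n a =>
      simp only [TensorProduct.assoc_tmul, TensorProduct.map_tmul, LinearMap.id_coe, id_eq,
        LinearMap.mul'_apply, LinearEquiv.coe_coe]
      induction (ΔM n) using TensorProduct.induction_on with
      | zero => simp [TensorProduct.tmul_zero, TensorProduct.zero_tmul]
      | tmul n₀ n₁ =>
          simp [Algebra.TensorProduct.tmul_mul_tmul, LinearMap.mul'_apply]
      | add v₁ v₂ ih₁ ih₂ =>
          simp only [map_add, TensorProduct.tmul_add, TensorProduct.add_tmul, ih₁, ih₂]
  | add w₁ w₂ ih₁ ih₂ =>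
      simp only [map_add, TensorProduct.tmul_add, TensorProduct.add_tmul, ih₁, ih₂]

private lemma goal1 (ΔM : M →ₗ[k] M ⊗[k] H)
    (hMcoassoc : (TensorProduct.assoc k M H H).toLinearMap ∘ₗ
        TensorProduct.map ΔM LinearMap.id ∘ₗ ΔM =
      TensorProduct.map LinearMap.id (Coalgebra.comul (R := k)) ∘ₗ ΔM)
    (φ : M →ₗ[k] M) :
    D1 k H (d0 k H ΔM φ) = D0 k H ΔM (d0 k H ΔM φ) := by
  have hco : ∀ m : M, TensorProduct.map ΔM LinearMap.id (ΔM m)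
      = (TensorProduct.assoc k M H H).symm
          (TensorProduct.map LinearMap.id ΔH (ΔM m)) := by
    intro m
    have h := LinearMap.congr_fun hMcoassoc m
    simp only [LinearMap.comp_apply, LinearEquiv.coe_coe] at h
    rw [← h, LinearEquiv.symm_apply_apply]
  have hsplit : TensorProduct.map (d0 k H ΔM φ) σH
      = TensorProduct.map
          (TensorProduct.map LinearMap.id μH ∘ₗ
            (TensorProduct.assoc k M H H).toLinearMap ∘ₗ
            TensorProduct.map ΔM LinearMap.id ∘ₗ
            TensorProduct.map φ σH) σH ∘ₗ
        TensorProduct.map ΔM LinearMap.id := by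
    rw [← TensorProduct.map_comp, LinearMap.comp_id]
    rfl
  have hcoφmap : TensorProduct.map (TensorProduct.map ΔM LinearMap.id ∘ₗ ΔM ∘ₗ φ) LinearMap.id
      = TensorProduct.map (TensorProduct.assoc k M H H).symm.toLinearMap
          (LinearMap.id (M := H ⊗[k] H)) ∘ₗ
        TensorProduct.map (TensorProduct.map LinearMap.id ΔH ∘ₗ ΔM ∘ₗ φ) LinearMap.id := by
    rw [← TensorProduct.map_comp, LinearMap.comp_id]
    congr 1
    ext m
    simp only [LinearMap.comp_apply, LinearEquiv.coe_coe]
    exact hco (φ m)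
  ext m
  have e1 : D1 k H (d0 k H ΔM φ) m
      = (VV k H) ((TensorProduct.map (TensorProduct.assoc k M H H).symm.toLinearMap LinearMap.id)
          ((TensorProduct.map (TensorProduct.map LinearMap.id ΔH ∘ₗ ΔM ∘ₗ φ) ΔH) (ΔM m))) := by
    have h := LinearMap.congr_fun (lemL1 k H ΔM φ) (ΔM m)
    simp only [LinearMap.comp_apply] at h
    simpa [D1, d0, LinearMap.comp_apply] using h
  have e2 : D0 k H ΔM (d0 k H ΔM φ) m
      = (VV k H) ((TensorProduct.map (TensorProduct.assoc k M H H).symm.toLinearMap LinearMap.id)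
          ((TensorProduct.map (TensorProduct.map LinearMap.id ΔH ∘ₗ ΔM ∘ₗ φ) ΔH) (ΔM m))) := by
    have h := LinearMap.congr_fun
      (lemL2 k H ΔM φ) ((TensorProduct.assoc k M H H).symm
        (TensorProduct.map LinearMap.id ΔH (ΔM m)))
    simp only [LinearMap.comp_apply, LinearEquiv.coe_coe, LinearEquiv.apply_symm_apply] at h
    have hstart : D0 k H ΔM (d0 k H ΔM φ) m
        = (TensorProduct.map
            (TensorProduct.map LinearMap.id μH ∘ₗ (TensorProduct.assoc k M H H).toLinearMap)
            LinearMap.id)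
          ((TensorProduct.assoc k (M ⊗[k] H) H H).symm
            ((TensorProduct.map ΔM (TensorProduct.comm k H H).toLinearMap)
              ((TensorProduct.assoc k M H H)
                ((TensorProduct.map
                  (TensorProduct.map LinearMap.id μH ∘ₗ
                    (TensorProduct.assoc k M H H).toLinearMap ∘ₗ
                    TensorProduct.map ΔM LinearMap.id ∘ₗ
                    TensorProduct.map φ σH) σH)
                  ((TensorProduct.assoc k M H H).symm
                    (TensorProduct.map LinearMap.id ΔH (ΔM m))))))) := by
      simp only [D0, LinearMap.comp_apply, LinearEquiv.coe_coe]
      rw [hsplit]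
      simp only [LinearMap.comp_apply]
      rw [hco m]
    rw [hstart, h, hcoφmap]
    simp only [LinearMap.comp_apply]
    congr 1
    have hfuse := LinearMap.congr_fun
      (HopfProofAux.mapF (R₀ := k) (TensorProduct.map LinearMap.id ΔH ∘ₗ ΔM ∘ₗ φ) ΔH) (ΔM m)
    simp only [LinearMap.comp_apply] at hfuse
    rw [hfuse]
  rw [e1, e2]

private lemma goal2 (ΔM : M →ₗ[k] M ⊗[k] H) (φ : M →ₗ[k] M) :
    D2 k H (d0 k H ΔM φ) = D0 k H ΔM (d1 k H φ) := by
  ext m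
  simp only [D2, D0, d0, d1, unit1, LinearMap.comp_apply, LinearMap.flip_apply,
    TensorProduct.mk_apply, LinearEquiv.coe_coe]
  induction (ΔM m) using TensorProduct.induction_on with
  | zero => simp
  | tmul x h =>
      simp only [TensorProduct.map_tmul, LinearMap.comp_apply, LinearMap.id_coe, id_eq,
        LinearMap.flip_apply, TensorProduct.mk_apply, TensorProduct.assoc_tmul,
        LinearEquiv.coe_coe, TensorProduct.comm_tmul]
      induction (ΔM (φ x)) using TensorProduct.induction_on with
      | zero => simp
      | tmul n a =>
          simp [LinearMap.mul'_apply, TensorProduct.comm_tmul, one_mul, mul_one]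
      | add w₁ w₂ ih₁ ih₂ =>
          simp only [map_add, TensorProduct.tmul_add, TensorProduct.add_tmul, ih₁, ih₂]
  | add z₁ z₂ ih₁ ih₂ =>
      simp only [map_add, TensorProduct.tmul_add, TensorProduct.add_tmul, ih₁, ih₂]

private lemma goal3 (φ : M →ₗ[k] M) :
    D2 k H (d1 k H φ) = D1 k H (d1 k H φ) := by
  ext m
  simp [D2, D1, d1, unit1, Algebra.TensorProduct.one_def]

end ModuleAux

/-- the precosimplicial identities `d¹d⁰ = d⁰d⁰`, `d²d⁰ = d⁰d¹` and
`d²d¹ = d¹d¹`. -/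
theorem precosimplicial_identities
    (ΔS : S →ₐ[k] S ⊗[k] H)
    (hScounit : ∀ s : S, (TensorProduct.rid k S)
      ((TensorProduct.map LinearMap.id (Coalgebra.counit (R := k))) (ΔS s)) = s)
    (hScoassoc : ∀ s : S, (TensorProduct.assoc k S H H)
        ((TensorProduct.map ΔS.toLinearMap LinearMap.id) (ΔS s)) =
      (TensorProduct.map LinearMap.id (Coalgebra.comul (R := k))) (ΔS s))
    (ΔM : M →ₗ[k] M ⊗[k] H)
    (hMcounit : (TensorProduct.rid k M).toLinearMap ∘ₗ
      TensorProduct.map LinearMap.id (Coalgebra.counit (R := k)) ∘ₗ ΔM = LinearMap.id)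
    (hMcoassoc : (TensorProduct.assoc k M H H).toLinearMap ∘ₗ
        TensorProduct.map ΔM LinearMap.id ∘ₗ ΔM =
      TensorProduct.map LinearMap.id (Coalgebra.comul (R := k)) ∘ₗ ΔM)
    (hHopfM : ∀ (s : S) (m : M), ΔM (s • m) = mulMH k H S (ΔM m ⊗ₜ[k] ΔS s))
    (φ : M →ₗ[k] M) (hφ : ∀ (s : S) (m : M), φ (s • m) = s • φ m) :
    D1 k H (d0 k H ΔM φ) = D0 k H ΔM (d0 k H ΔM φ) ∧
    D2 k H (d0 k H ΔM φ) = D0 k H ΔM (d1 k H φ) ∧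
    D2 k H (d1 k H φ) = D1 k H (d1 k H φ) := ⟨goal1 k H ΔM hMcoassoc φ, goal2 k H ΔM φ, goal3 k H φ⟩
end

section
/- Let M be an (H,S)-Hopf module with coaction Δ_M, let Δ_M' = (id_M ⊗ σ_H) ∘ Δ_M, and let ∘· be the composition-type product on Hom_k(M, M ⊗ H). Then the translation map κ(Φ) = Φ ∘· Δ_M is a bijection from Hom_k(M, M⊗H) to itself with inverse Φ ↦ Φ ∘· Δ_M'. Moreover, Φ satisfies Φ(ms) = Φ(m)s for all m ∈ M, s ∈ S (S acting on M ⊗ H on the first factor) if and only if κ(Φ) satisfies κ(Φ)(ms) = κ(Φ)(m)Δ_S(s) for all m, s. -/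
open TensorProduct

variable (k : Type*) [CommRing k]
variable (H : Type*) [Ring H] [HopfAlgebra k H]
variable {M : Type*} [AddCommGroup M] [Module k M]

variable (S : Type*) [Ring S] [Algebra k S]
variable [Module S M] [IsScalarTower k S M] [SMulCommClass k S M] [SMulCommClass S k M]

variable {S}

set_option maxHeartbeats 1000000
set_option synthInstance.maxHeartbeats 200000
set_option linter.unusedSectionVars false

namespace TransAux

noncomputable abbrev σ : H →ₗ[k] H := HopfAlgebra.antipode (R := k)
noncomputable abbrev μ : H ⊗[k] H →ₗ[k] H := LinearMap.mul' k H
noncomputable abbrev Δ : H →ₗ[k] H ⊗[k] H := Coalgebra.comul (R := k)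
noncomputable abbrev εH : H →ₗ[k] k := Coalgebra.counit (R := k)

/-- `F = σ ∘ μ`. -/
noncomputable def Fa : H ⊗[k] H →ₗ[k] H := σ k H ∘ₗ μ k H

/-- `ν (x ⊗ y) = σ y * σ x`. -/
noncomputable def νa : H ⊗[k] H →ₗ[k] H :=
  μ k H ∘ₗ TensorProduct.map (σ k H) (σ k H) ∘ₗ (TensorProduct.comm k H H).toLinearMap

/-- `T ((a ⊗ b) ⊗ z) = a * z * σ b`. -/
noncomputable def Ta : (H ⊗[k] H) ⊗[k] H →ₗ[k] H :=
  μ k H ∘ₗ TensorProduct.map (μ k H) (σ k H) ∘ₗ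
    (TensorProduct.assoc k H H H).symm.toLinearMap ∘ₗ
    LinearMap.lTensor H (TensorProduct.comm k H H).toLinearMap ∘ₗ
    (TensorProduct.assoc k H H H).toLinearMap

/-- `Q ((a₁⊗a₂) ⊗ (b₁⊗b₂)) = a₁ b₁ * σ b₂ * σ a₂`. -/
noncomputable def Qa : (H ⊗[k] H) ⊗[k] (H ⊗[k] H) →ₗ[k] H :=
  μ k H ∘ₗ TensorProduct.map (μ k H) (νa k H) ∘ₗ
    (TensorProduct.tensorTensorTensorComm k H H H H).toLinearMap

/-- `P ((a₁⊗a₂) ⊗ (b₁⊗b₂)) = σ(a₁ b₁) * (a₂ b₂)`. -/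
noncomputable def Pa : (H ⊗[k] H) ⊗[k] (H ⊗[k] H) →ₗ[k] H :=
  μ k H ∘ₗ TensorProduct.map (Fa k H) (μ k H) ∘ₗ
    (TensorProduct.tensorTensorTensorComm k H H H H).toLinearMap

@[simp] lemma νa_tmul (x y : H) : νa k H (x ⊗ₜ y) = σ k H y * σ k H x := by
  simp [νa]

@[simp] lemma Ta_tmul (a b z : H) : Ta k H ((a ⊗ₜ b) ⊗ₜ z) = a * z * σ k H b := by
  simp [Ta, mul_assoc]

@[simp] lemma Qa_tmul (a₁ a₂ b₁ b₂ : H) :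
    Qa k H ((a₁ ⊗ₜ a₂) ⊗ₜ (b₁ ⊗ₜ b₂)) = a₁ * b₁ * (σ k H b₂ * σ k H a₂) := by
  simp [Qa, mul_assoc]

@[simp] lemma Pa_tmul (a₁ a₂ b₁ b₂ : H) :
    Pa k H ((a₁ ⊗ₜ a₂) ⊗ₜ (b₁ ⊗ₜ b₂)) = σ k H (a₁ * b₁) * (a₂ * b₂) := by
  simp [Pa, Fa]

lemma mul2 (u v : H ⊗[k] H) :
    TensorProduct.map (μ k H) (μ k H)
      (TensorProduct.tensorTensorTensorComm k H H H H (u ⊗ₜ v)) = u * v := by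
  induction u using TensorProduct.induction_on with
  | zero => simp [zero_tmul]
  | tmul a b =>
    induction v using TensorProduct.induction_on with
    | zero => simp [tmul_zero]
    | tmul c d => simp [Algebra.TensorProduct.tmul_mul_tmul]
    | add v₁ v₂ h₁ h₂ => simp only [tmul_add, map_add, h₁, h₂, mul_add]
  | add u₁ u₂ h₁ h₂ => simp only [add_tmul, map_add, h₁, h₂, add_mul]

lemma Pcoll (a b : H) : Pa k H (Δ k H a ⊗ₜ Δ k H b) = (εH k H a * εH k H b) • 1 := by
  have h : TensorProduct.map (Fa k H) (μ k H) =
      (TensorProduct.map (σ k H) LinearMap.id).comp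
        (TensorProduct.map (μ k H) (μ k H)) := by
    rw [← TensorProduct.map_comp]; rfl
  have : Pa k H (Δ k H a ⊗ₜ Δ k H b) =
      μ k H ((σ k H).rTensor H (Δ k H (a * b))) := by
    rw [Pa]
    simp only [LinearMap.comp_apply, LinearEquiv.coe_coe, h, mul2]
    rw [← Bialgebra.comul_mul]
    rfl
  rw [this, HopfAlgebra.mul_antipode_rTensor_comul_apply,
    Bialgebra.counit_mul, Algebra.algebraMap_eq_smul_one]

lemma QT (u v : H ⊗[k] H) :
    Qa k H (u ⊗ₜ v) = Ta k H (u ⊗ₜ (μ k H ((σ k H).lTensor H v))) := by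
  induction u using TensorProduct.induction_on with
  | zero => simp [zero_tmul]
  | tmul a₁ a₂ =>
    induction v using TensorProduct.induction_on with
    | zero => simp [tmul_zero]
    | tmul b₁ b₂ => simp [mul_assoc]
    | add v₁ v₂ h₁ h₂ => simp only [tmul_add, map_add, h₁, h₂]
  | add u₁ u₂ h₁ h₂ => simp only [add_tmul, map_add, h₁, h₂]

lemma T1 (u : H ⊗[k] H) : Ta k H (u ⊗ₜ 1) = μ k H ((σ k H).lTensor H u) := by
  induction u using TensorProduct.induction_on with
  | zero => simp [zero_tmul]
  | tmul a b => simp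
  | add u₁ u₂ h₁ h₂ => simp only [add_tmul, map_add, h₁, h₂]

lemma Qcoll (a b : H) : Qa k H (Δ k H a ⊗ₜ Δ k H b) = (εH k H a * εH k H b) • 1 := by
  rw [QT, HopfAlgebra.mul_antipode_lTensor_comul_apply, Algebra.algebraMap_eq_smul_one,
    tmul_smul, map_smul, T1, HopfAlgebra.mul_antipode_lTensor_comul_apply,
    Algebra.algebraMap_eq_smul_one, smul_smul, mul_comm]


/-- Assembled convolution `W(p ⊗ q)` on triple coproducts. -/
noncomputable def Wa : (H ⊗[k] (H ⊗[k] H)) ⊗[k] (H ⊗[k] (H ⊗[k] H)) →ₗ[k] H :=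
  μ k H ∘ₗ TensorProduct.map (Fa k H) (Qa k H) ∘ₗ
    (TensorProduct.tensorTensorTensorComm k H (H ⊗[k] H) H (H ⊗[k] H)).toLinearMap

lemma Wa_tmul (a c : H) (p q : H ⊗[k] H) :
    Wa k H ((a ⊗ₜ p) ⊗ₜ (c ⊗ₜ q)) = Fa k H (a ⊗ₜ c) * Qa k H (p ⊗ₜ q) := by
  simp [Wa]

lemma E1 (u v : H ⊗[k] H) :
    Wa k H ((Δ k H).lTensor H u ⊗ₜ (Δ k H).lTensor H v) =
      Fa k H ((TensorProduct.rid k H ((εH k H).lTensor H u)) ⊗ₜ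
        (TensorProduct.rid k H ((εH k H).lTensor H v))) := by
  induction u using TensorProduct.induction_on with
  | zero => simp [zero_tmul, tmul_zero]
  | tmul a b =>
    induction v using TensorProduct.induction_on with
    | zero => simp [tmul_zero, zero_tmul]
    | tmul c d =>
      simp only [LinearMap.lTensor_tmul, Wa_tmul, Qcoll, TensorProduct.rid_tmul]
      rw [← smul_tmul', tmul_smul, map_smul, map_smul, smul_smul,
        Algebra.mul_smul_comm, mul_one]
    | add v₁ v₂ h₁ h₂ => simp only [tmul_add, map_add, h₁, h₂]
  | add u₁ u₂ h₁ h₂ => simp only [add_tmul, map_add, h₁, h₂]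

lemma E2sub (b d : H) (p q : H ⊗[k] H) :
    Wa k H ((TensorProduct.assoc k H H H (p ⊗ₜ b)) ⊗ₜ
        (TensorProduct.assoc k H H H (q ⊗ₜ d))) =
      Pa k H (p ⊗ₜ q) * νa k H (b ⊗ₜ d) := by
  induction p using TensorProduct.induction_on with
  | zero => simp [zero_tmul]
  | tmul a₁ a₂ =>
    induction q using TensorProduct.induction_on with
    | zero => simp [zero_tmul, tmul_zero]
    | tmul c₁ c₂ =>
      simp only [assoc_tmul, Wa_tmul, Qa_tmul, Pa_tmul, νa_tmul, Fa,
        LinearMap.comp_apply, LinearMap.mul'_apply]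
      rw [← mul_assoc]
    | add q₁ q₂ h₁ h₂ => simp only [add_tmul, map_add, tmul_add, h₁, h₂, add_mul]
  | add p₁ p₂ h₁ h₂ => simp only [add_tmul, map_add, tmul_add, h₁, h₂, add_mul]

lemma E2 (u v : H ⊗[k] H) :
    Wa k H ((TensorProduct.assoc k H H H ((Δ k H).rTensor H u)) ⊗ₜ
        (TensorProduct.assoc k H H H ((Δ k H).rTensor H v))) =
      νa k H ((TensorProduct.lid k H ((εH k H).rTensor H u)) ⊗ₜ
        (TensorProduct.lid k H ((εH k H).rTensor H v))) := by
  induction u using TensorProduct.induction_on with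
  | zero => simp [zero_tmul, tmul_zero]
  | tmul a b =>
    induction v using TensorProduct.induction_on with
    | zero => simp [tmul_zero, zero_tmul]
    | tmul c d =>
      simp only [LinearMap.rTensor_tmul, E2sub, Pcoll, TensorProduct.lid_tmul]
      rw [← smul_tmul', tmul_smul, map_smul, map_smul, smul_smul,
        smul_mul_assoc, one_mul]
    | add v₁ v₂ h₁ h₂ => simp only [tmul_add, map_add, h₁, h₂]
  | add u₁ u₂ h₁ h₂ => simp only [add_tmul, map_add, h₁, h₂]

/-- The antipode is an anti-homomorphism of multiplication. -/
theorem antipode_mul (x y : H) :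
    HopfAlgebra.antipode (R := k) (x * y) =
      HopfAlgebra.antipode (R := k) y * HopfAlgebra.antipode (R := k) x := by
  have hx : TensorProduct.rid k H ((εH k H).lTensor H (Δ k H x)) = x := by
    rw [Coalgebra.lTensor_counit_comul]; simp
  have hy : TensorProduct.rid k H ((εH k H).lTensor H (Δ k H y)) = y := by
    rw [Coalgebra.lTensor_counit_comul]; simp
  have hx' : TensorProduct.lid k H ((εH k H).rTensor H (Δ k H x)) = x := by
    rw [Coalgebra.rTensor_counit_comul]; simp
  have hy' : TensorProduct.lid k H ((εH k H).rTensor H (Δ k H y)) = y := by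
    rw [Coalgebra.rTensor_counit_comul]; simp
  have e1 := E1 k H (Δ k H x) (Δ k H y)
  rw [hx, hy] at e1
  have e2 := E2 k H (Δ k H x) (Δ k H y)
  rw [hx', hy', Coalgebra.coassoc_apply, Coalgebra.coassoc_apply, e1] at e2
  have : Fa k H (x ⊗ₜ y) = σ k H (x * y) := by simp [Fa]
  rw [this] at e2
  simpa using e2



/-- `Fm A` is `x ↦ x ∘· A`-style operator: `Fm A (m ⊗ h) = A m · (1 ⊗ h)`. -/
noncomputable def Fm (A : M →ₗ[k] M ⊗[k] H) : M ⊗[k] H →ₗ[k] M ⊗[k] H :=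
  TensorProduct.map LinearMap.id (LinearMap.mul' k H) ∘ₗ
    (TensorProduct.assoc k M H H).toLinearMap ∘ₗ TensorProduct.map A LinearMap.id

lemma cdot_Fm (A B : M →ₗ[k] M ⊗[k] H) : cdot k H A B = Fm k H A ∘ₗ B :=
  LinearMap.ext fun _ => rfl

lemma cdot_apply (A B : M →ₗ[k] M ⊗[k] H) (m : M) : cdot k H A B m = Fm k H A (B m) := rfl

lemma Fm_tmul (A : M →ₗ[k] M ⊗[k] H) (m : M) (h : H) :
    Fm k H A (m ⊗ₜ h) = LinearMap.lTensor M (LinearMap.mulRight k h) (A m) := by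
  simp only [Fm, LinearMap.comp_apply, LinearEquiv.coe_coe, TensorProduct.map_tmul,
    LinearMap.id_apply]
  induction A m using TensorProduct.induction_on with
  | zero => simp [zero_tmul]
  | tmul a b => simp
  | add u₁ u₂ h₁ h₂ => simp only [add_tmul, map_add, h₁, h₂]

lemma Fm_lTensor (A : M →ₗ[k] M ⊗[k] H) (h : H) (x : M ⊗[k] H) :
    Fm k H A (LinearMap.lTensor M (LinearMap.mulRight k h) x) =
      LinearMap.lTensor M (LinearMap.mulRight k h) (Fm k H A x) := by
  induction x using TensorProduct.induction_on with
  | zero => simp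
  | tmul m h' =>
    have : LinearMap.mulRight k (h' * h) =
        (LinearMap.mulRight k h).comp (LinearMap.mulRight k h') := by
      ext x; simp [mul_assoc]
    simp only [LinearMap.lTensor_tmul, LinearMap.mulRight_apply, Fm_tmul, this,
      LinearMap.lTensor_comp, LinearMap.comp_apply]
  | add u₁ u₂ h₁ h₂ => simp only [map_add, h₁, h₂]

lemma cdot_assoc (A B C : M →ₗ[k] M ⊗[k] H) :
    cdot k H (cdot k H A B) C = cdot k H A (cdot k H B C) := by
  simp only [cdot_Fm]
  rw [← LinearMap.comp_assoc]
  congr 1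
  apply LinearMap.ext
  intro x
  induction x using TensorProduct.induction_on with
  | zero => simp
  | tmul m h => simp only [LinearMap.comp_apply, Fm_tmul, Fm_lTensor]
  | add u₁ u₂ h₁ h₂ => simp only [map_add, h₁, h₂]

lemma cdot_unit_right (A : M →ₗ[k] M ⊗[k] H) : cdot k H A (unit1 k H) = A := by
  apply LinearMap.ext
  intro m
  have : (unit1 k H : M →ₗ[k] M ⊗[k] H) m = m ⊗ₜ 1 := rfl
  rw [cdot_apply, this, Fm_tmul]
  simp

lemma cdot_unit_left (A : M →ₗ[k] M ⊗[k] H) : cdot k H (unit1 k H) A = A := by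
  apply LinearMap.ext
  intro m
  rw [cdot_apply]
  induction A m using TensorProduct.induction_on with
  | zero => simp
  | tmul a b =>
    rw [Fm_tmul]
    have : (unit1 k H : M →ₗ[k] M ⊗[k] H) a = a ⊗ₜ 1 := rfl
    rw [this]
    simp
  | add u₁ u₂ h₁ h₂ => simp only [map_add, h₁, h₂]


section Keys

variable (ΔM : M →ₗ[k] M ⊗[k] H)


lemma shuffle1 (u : M ⊗[k] H) :
    TensorProduct.map LinearMap.id (LinearMap.mul' k H) ((TensorProduct.assoc k M H H)
      (TensorProduct.map (TensorProduct.map LinearMap.id (HopfAlgebra.antipode (R := k) (A := H)) ∘ₗ ΔM) LinearMap.id u)) =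
    TensorProduct.map LinearMap.id ((LinearMap.mul' k H) ∘ₗ ((HopfAlgebra.antipode (R := k) (A := H))).rTensor H)
      ((TensorProduct.assoc k M H H) (TensorProduct.map ΔM LinearMap.id u)) := by
  induction u using TensorProduct.induction_on with
  | zero => simp
  | tmul m h =>
    simp only [TensorProduct.map_tmul, LinearMap.id_apply, LinearMap.comp_apply]
    induction ΔM m using TensorProduct.induction_on with
    | zero => simp [zero_tmul]
    | tmul a b => simp
    | add v₁ v₂ h₁ h₂ => simp only [map_add, add_tmul, h₁, h₂]
  | add u₁ u₂ h₁ h₂ => simp only [map_add, h₁, h₂]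

lemma shuffle2 (u : M ⊗[k] H) :
    TensorProduct.map LinearMap.id (LinearMap.mul' k H) ((TensorProduct.assoc k M H H)
      (TensorProduct.map ΔM LinearMap.id (TensorProduct.map LinearMap.id (HopfAlgebra.antipode (R := k) (A := H)) u))) =
    TensorProduct.map LinearMap.id ((LinearMap.mul' k H) ∘ₗ ((HopfAlgebra.antipode (R := k) (A := H))).lTensor H)
      ((TensorProduct.assoc k M H H) (TensorProduct.map ΔM LinearMap.id u)) := by
  induction u using TensorProduct.induction_on with
  | zero => simp
  | tmul m h =>
    simp only [TensorProduct.map_tmul, LinearMap.id_apply, LinearMap.comp_apply]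
    induction ΔM m using TensorProduct.induction_on with
    | zero => simp [zero_tmul]
    | tmul a b => simp
    | add v₁ v₂ h₁ h₂ => simp only [map_add, add_tmul, h₁, h₂]
  | add u₁ u₂ h₁ h₂ => simp only [map_add, h₁, h₂]

variable
    (hMcounit : (TensorProduct.rid k M).toLinearMap ∘ₗ
      TensorProduct.map LinearMap.id (Coalgebra.counit (R := k) (A := H)) ∘ₗ ΔM = LinearMap.id)
    (hMcoassoc : (TensorProduct.assoc k M H H).toLinearMap ∘ₗ
        TensorProduct.map ΔM LinearMap.id ∘ₗ ΔM =
      TensorProduct.map LinearMap.id (Coalgebra.comul (R := k) (A := H)) ∘ₗ ΔM)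

include hMcounit hMcoassoc

lemma collapse (f : H ⊗[k] H →ₗ[k] H) (hf : f ∘ₗ (Coalgebra.comul (R := k) (A := H)) = Algebra.linearMap k H ∘ₗ (Coalgebra.counit (R := k) (A := H)))
    (m : M) :
    TensorProduct.map LinearMap.id f
      ((TensorProduct.assoc k M H H) (TensorProduct.map ΔM LinearMap.id (ΔM m))) =
    unit1 k H m := by
  have hco := LinearMap.congr_fun hMcoassoc m
  simp only [LinearMap.comp_apply, LinearEquiv.coe_coe] at hco
  rw [hco]
  have h1 : TensorProduct.map (LinearMap.id (M := M)) f ∘ₗ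
      TensorProduct.map LinearMap.id (Coalgebra.comul (R := k) (A := H)) =
      TensorProduct.map LinearMap.id (f ∘ₗ (Coalgebra.comul (R := k) (A := H))) := by
    rw [← TensorProduct.map_comp, LinearMap.id_comp]
  rw [← LinearMap.comp_apply, h1, hf]
  have h2 : TensorProduct.map (LinearMap.id (M := M)) (Algebra.linearMap k H ∘ₗ (Coalgebra.counit (R := k) (A := H))) =
      TensorProduct.map LinearMap.id (Algebra.linearMap k H) ∘ₗ
        TensorProduct.map LinearMap.id (Coalgebra.counit (R := k) (A := H)) := by
    rw [← TensorProduct.map_comp, LinearMap.id_comp]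
  rw [h2, LinearMap.comp_apply]
  have hcu := LinearMap.congr_fun hMcounit m
  simp only [LinearMap.comp_apply, LinearEquiv.coe_toLinearMap, LinearMap.id_apply] at hcu
  have : TensorProduct.map (LinearMap.id (M := M)) (Coalgebra.counit (R := k) (A := H)) (ΔM m) =
      (TensorProduct.rid k M).symm m := by
    rw [LinearEquiv.eq_symm_apply]; exact hcu
  rw [this]
  have : ((TensorProduct.rid k M).symm m : M ⊗[k] k) = m ⊗ₜ 1 := rfl
  rw [this]
  simp only [TensorProduct.map_tmul, LinearMap.id_apply, Algebra.linearMap_apply, map_one]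
  rfl

lemma key1 : cdot k H (TensorProduct.map LinearMap.id (HopfAlgebra.antipode (R := k) (A := H)) ∘ₗ ΔM) ΔM = unit1 k H := by
  apply LinearMap.ext
  intro m
  have : cdot k H (TensorProduct.map LinearMap.id (HopfAlgebra.antipode (R := k) (A := H)) ∘ₗ ΔM) ΔM m =
      TensorProduct.map LinearMap.id (LinearMap.mul' k H) ((TensorProduct.assoc k M H H)
        (TensorProduct.map (TensorProduct.map LinearMap.id (HopfAlgebra.antipode (R := k) (A := H)) ∘ₗ ΔM) LinearMap.id (ΔM m))) := rfl
  rw [this, shuffle1]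
  exact collapse k H ΔM hMcounit hMcoassoc _ HopfAlgebra.mul_antipode_rTensor_comul m

lemma key2 : cdot k H ΔM (TensorProduct.map LinearMap.id (HopfAlgebra.antipode (R := k) (A := H)) ∘ₗ ΔM) = unit1 k H := by
  apply LinearMap.ext
  intro m
  have : cdot k H ΔM (TensorProduct.map LinearMap.id (HopfAlgebra.antipode (R := k) (A := H)) ∘ₗ ΔM) m =
      TensorProduct.map LinearMap.id (LinearMap.mul' k H) ((TensorProduct.assoc k M H H)
        (TensorProduct.map ΔM LinearMap.id
          (TensorProduct.map LinearMap.id (HopfAlgebra.antipode (R := k) (A := H)) (ΔM m)))) := rfl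
  rw [this, shuffle2]
  exact collapse k H ΔM hMcounit hMcoassoc _ HopfAlgebra.mul_antipode_lTensor_comul m

end Keys


section Part2

variable {S : Type*} [Ring S] [Algebra k S]
variable [Module S M] [IsScalarTower k S M] [SMulCommClass k S M] [SMulCommClass S k M]

lemma mulMH_tmul (m : M) (h : H) (s : S) (h' : H) :
    mulMH k H S ((m ⊗ₜ h) ⊗ₜ (s ⊗ₜ h')) = (s • m) ⊗ₜ (h * h') := by
  simp [mulMH, actMS]

lemma smul_z (s : S) (z : M ⊗[k] H) (e : H) :
    LinearMap.lTensor M (LinearMap.mulRight k e) (s • z) =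
      s • LinearMap.lTensor M (LinearMap.mulRight k e) z := by
  induction z using TensorProduct.induction_on with
  | zero => simp
  | tmul a b => rw [smul_tmul']; simp [smul_tmul']
  | add u₁ u₂ h₁ h₂ => rw [smul_add, map_add, h₁, h₂, map_add, smul_add]

lemma mulMH_smul (s : S) (h' : H) (z : M ⊗[k] H) :
    mulMH k H S (z ⊗ₜ (s ⊗ₜ h')) =
      s • LinearMap.lTensor M (LinearMap.mulRight k h') z := by
  induction z using TensorProduct.induction_on with
  | zero => simp
  | tmul a b => rw [mulMH_tmul]; simp [smul_tmul']
  | add u₁ u₂ h₁ h₂ =>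
    rw [add_tmul, map_add, h₁, h₂, map_add, smul_add]

lemma forward_key (Φ : M →ₗ[k] M ⊗[k] H) (hΦ : ∀ (s : S) (m : M), Φ (s • m) = s • Φ m)
    (x : M ⊗[k] H) (t : S ⊗[k] H) :
    Fm k H Φ (mulMH k H S (x ⊗ₜ t)) = mulMH k H S (Fm k H Φ x ⊗ₜ t) := by
  induction x using TensorProduct.induction_on with
  | zero => simp
  | tmul m h =>
    induction t using TensorProduct.induction_on with
    | zero => simp
    | tmul s h' =>
      rw [mulMH_tmul, Fm_tmul, hΦ, Fm_tmul, smul_z, mulMH_smul]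
      have : LinearMap.mulRight k (h * h') =
          (LinearMap.mulRight k h').comp (LinearMap.mulRight k h) := by
        ext x; simp [mul_assoc]
      rw [this, LinearMap.lTensor_comp, LinearMap.comp_apply]
    | add t₁ t₂ h₁ h₂ => simp only [tmul_add, map_add, h₁, h₂]
  | add u₁ u₂ h₁ h₂ => simp only [add_tmul, map_add, h₁, h₂]

/-- `bigH (h ⊗ (h₁ ⊗ h₂)) = h₁ * σ (h * h₂)`. -/
noncomputable def bigH : H ⊗[k] (H ⊗[k] H) →ₗ[k] H :=
  LinearMap.mul' k H ∘ₗ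
    TensorProduct.map LinearMap.id ((HopfAlgebra.antipode (R := k)) ∘ₗ LinearMap.mul' k H) ∘ₗ
    (TensorProduct.assoc k H H H).toLinearMap ∘ₗ
    TensorProduct.map (TensorProduct.comm k H H).toLinearMap LinearMap.id ∘ₗ
    (TensorProduct.assoc k H H H).symm.toLinearMap

@[simp] lemma bigH_tmul (h h₁ h₂ : H) :
    bigH k H (h ⊗ₜ (h₁ ⊗ₜ h₂)) = h₁ * HopfAlgebra.antipode (R := k) (h * h₂) := by
  simp [bigH]

/-- The auxiliary operator `Tb G ((m⊗h) ⊗ ((s⊗h₁)⊗h₂)) = (G m) · (s ⊗ h₁ σ(h h₂))`. -/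
noncomputable def Tb (G : M →ₗ[k] M ⊗[k] H) :
    (M ⊗[k] H) ⊗[k] ((S ⊗[k] H) ⊗[k] H) →ₗ[k] M ⊗[k] H :=
  mulMH k H S ∘ₗ TensorProduct.map G LinearMap.id ∘ₗ
    (TensorProduct.assoc k M S H).toLinearMap ∘ₗ
    TensorProduct.map LinearMap.id (bigH k H) ∘ₗ
    (TensorProduct.tensorTensorTensorComm k M H S (H ⊗[k] H)).toLinearMap ∘ₗ
    TensorProduct.map LinearMap.id (TensorProduct.assoc k S H H).toLinearMap

@[simp] lemma Tb_tmul (G : M →ₗ[k] M ⊗[k] H) (m : M) (h : H) (s : S) (h₁ h₂ : H) :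
    Tb k H G ((m ⊗ₜ h) ⊗ₜ ((s ⊗ₜ h₁) ⊗ₜ h₂)) =
      mulMH k H S (G m ⊗ₜ (s ⊗ₜ (h₁ * HopfAlgebra.antipode (R := k) (h * h₂)))) := by
  simp [Tb]


lemma lmul_mulMH (e : H) (z : M ⊗[k] H) (s₀ : S) (h₁ : H) :
    LinearMap.lTensor M (LinearMap.mulRight k e) (mulMH k H S (z ⊗ₜ (s₀ ⊗ₜ h₁))) =
      mulMH k H S (z ⊗ₜ (s₀ ⊗ₜ (h₁ * e))) := by
  rw [mulMH_smul, smul_z, mulMH_smul]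
  have : LinearMap.mulRight k (h₁ * e) =
      (LinearMap.mulRight k e).comp (LinearMap.mulRight k h₁) := by
    ext x; simp [mul_assoc]
  rw [this, LinearMap.lTensor_comp, LinearMap.comp_apply]

lemma L1a (G : M →ₗ[k] M ⊗[k] H) (m : M) (h h₂ : H) (y : S ⊗[k] H) :
    Tb k H G ((m ⊗ₜ h) ⊗ₜ (y ⊗ₜ h₂)) =
      LinearMap.lTensor M
        (LinearMap.mulRight k (HopfAlgebra.antipode (R := k) (h * h₂)))
        (mulMH k H S (G m ⊗ₜ y)) := by
  induction y using TensorProduct.induction_on with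
  | zero => simp
  | tmul s₀ h₁ => rw [Tb_tmul, lmul_mulMH]
  | add y₁ y₂ h₁' h₂' => simp only [add_tmul, tmul_add, map_add, h₁', h₂']

lemma L1 (G : M →ₗ[k] M ⊗[k] H) (ds : S →ₗ[k] S ⊗[k] H)
    (hG : ∀ (s : S) (m : M), G (s • m) = mulMH k H S (G m ⊗ₜ ds s))
    (x : M ⊗[k] H) (t : S ⊗[k] H) :
    Fm k H G (TensorProduct.map LinearMap.id (HopfAlgebra.antipode (R := k))
        (mulMH k H S (x ⊗ₜ t))) =
      Tb k H G (x ⊗ₜ (TensorProduct.map ds LinearMap.id t)) := by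
  induction x using TensorProduct.induction_on with
  | zero => simp
  | tmul m h =>
    induction t using TensorProduct.induction_on with
    | zero => simp
    | tmul s' h' =>
      rw [mulMH_tmul, TensorProduct.map_tmul, LinearMap.id_apply, Fm_tmul, hG,
        TensorProduct.map_tmul, LinearMap.id_apply, L1a]
    | add t₁ t₂ h₁' h₂' => simp only [tmul_add, map_add, h₁', h₂']
  | add u₁ u₂ h₁' h₂' => simp only [add_tmul, map_add, h₁', h₂']

lemma ltensor_smul_apply (c : k) (f : H →ₗ[k] H) (z : M ⊗[k] H) :
    LinearMap.lTensor M (c • f) z = c • LinearMap.lTensor M f z := by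
  induction z using TensorProduct.induction_on with
  | zero => simp
  | tmul a b => simp [tmul_smul]
  | add u₁ u₂ h₁ h₂ => simp only [map_add, h₁, h₂, smul_add]

lemma smul_smul_comm' (s : S) (c : k) (z : M ⊗[k] H) :
    s • c • z = c • (s • z) := by
  induction z using TensorProduct.induction_on with
  | zero => simp
  | tmul a b =>
    simp only [smul_tmul']
    rw [smul_comm]
  | add u₁ u₂ h₁ h₂ => simp only [smul_add, h₁, h₂]

lemma smul_assoc'' (c : k) (s : S) (z : M ⊗[k] H) :
    (c • s) • z = c • (s • z) := by
  induction z using TensorProduct.induction_on with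
  | zero => simp
  | tmul a b => simp only [smul_tmul']; rw [smul_assoc]
  | add u₁ u₂ h₁ h₂ => simp only [smul_add, h₁, h₂]

lemma L2a (G : M →ₗ[k] M ⊗[k] H) (m : M) (h : H) (s' : S) (w : H ⊗[k] H) :
    Tb k H G ((m ⊗ₜ h) ⊗ₜ ((TensorProduct.assoc k S H H).symm (s' ⊗ₜ w))) =
      s' • LinearMap.lTensor M
        (LinearMap.mulRight k
          (LinearMap.mul' k H ((HopfAlgebra.antipode (R := k)).lTensor H w) *
            HopfAlgebra.antipode (R := k) h))
        (G m) := by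
  induction w using TensorProduct.induction_on with
  | zero => simp
  | tmul h₁ h₂ =>
    rw [TensorProduct.assoc_symm_tmul, Tb_tmul, mulMH_smul]
    rw [antipode_mul k H h h₂]
    simp [mul_assoc]
  | add w₁ w₂ hw₁ hw₂ =>
    have hmr : ∀ (a b : H), LinearMap.mulRight k (a + b) =
        LinearMap.mulRight k a + LinearMap.mulRight k b := by
      intro a b; ext x; simp [mul_add]
    simp only [tmul_add, map_add, hw₁, hw₂, add_mul, hmr, LinearMap.lTensor_add,
      LinearMap.add_apply, smul_add]

lemma L2 (G : M →ₗ[k] M ⊗[k] H) (x : M ⊗[k] H) (t : S ⊗[k] H) :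
    Tb k H G (x ⊗ₜ ((TensorProduct.assoc k S H H).symm
        (TensorProduct.map LinearMap.id (Coalgebra.comul (R := k)) t))) =
      (TensorProduct.rid k S (TensorProduct.map LinearMap.id (Coalgebra.counit (R := k)) t)) •
        Fm k H G (TensorProduct.map LinearMap.id (HopfAlgebra.antipode (R := k)) x) := by
  induction x using TensorProduct.induction_on with
  | zero => simp
  | tmul m h =>
    induction t using TensorProduct.induction_on with
    | zero => simp
    | tmul s' h'' =>
      rw [TensorProduct.map_tmul, LinearMap.id_apply, L2a,
        HopfAlgebra.mul_antipode_lTensor_comul_apply]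
      have h1 : (algebraMap k H) (Coalgebra.counit (R := k) h'') *
          HopfAlgebra.antipode (R := k) h =
          Coalgebra.counit (R := k) h'' • HopfAlgebra.antipode (R := k) h := by
        rw [Algebra.smul_def]
      have h2 : LinearMap.mulRight k
            ((Coalgebra.counit (R := k) h'' : k) • HopfAlgebra.antipode (R := k) h) =
          (Coalgebra.counit (R := k) h'' : k) •
            LinearMap.mulRight k (HopfAlgebra.antipode (R := k) h) := by
        ext x; simp [Algebra.mul_smul_comm]
      rw [h1, h2, ltensor_smul_apply, smul_smul_comm']
      rw [TensorProduct.map_tmul, LinearMap.id_apply, TensorProduct.rid_tmul,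
        smul_assoc'']
      rw [TensorProduct.map_tmul, LinearMap.id_apply, Fm_tmul]
    | add t₁ t₂ h₁' h₂' => simp only [tmul_add, map_add, h₁', h₂', add_smul]
  | add u₁ u₂ h₁' h₂' => simp only [add_tmul, map_add, h₁', h₂', smul_add]

end Part2

end TransAux

/-- the translation map `κ(Φ) = Φ ∘· Δ_M` is a bijection of
`Hom_k(M, M ⊗ H)` with inverse `Φ ↦ Φ ∘· Δ_M'` (where `Δ_M' = (id ⊗ σ_H)Δ_M`);
moreover `Φ` is `S`-linear iff `κ(Φ)` is twisted `S`-linear. -/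
theorem translation_map_bijective
    (ΔS : S →ₐ[k] S ⊗[k] H)
    (hScounit : ∀ s : S, (TensorProduct.rid k S)
      ((TensorProduct.map LinearMap.id (Coalgebra.counit (R := k))) (ΔS s)) = s)
    (hScoassoc : ∀ s : S, (TensorProduct.assoc k S H H)
        ((TensorProduct.map ΔS.toLinearMap LinearMap.id) (ΔS s)) =
      (TensorProduct.map LinearMap.id (Coalgebra.comul (R := k))) (ΔS s))
    (ΔM : M →ₗ[k] M ⊗[k] H)
    (hMcounit : (TensorProduct.rid k M).toLinearMap ∘ₗ
      TensorProduct.map LinearMap.id (Coalgebra.counit (R := k)) ∘ₗ ΔM = LinearMap.id)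
    (hMcoassoc : (TensorProduct.assoc k M H H).toLinearMap ∘ₗ
        TensorProduct.map ΔM LinearMap.id ∘ₗ ΔM =
      TensorProduct.map LinearMap.id (Coalgebra.comul (R := k)) ∘ₗ ΔM)
    (hHopfM : ∀ (s : S) (m : M), ΔM (s • m) = mulMH k H S (ΔM m ⊗ₜ[k] ΔS s))
 :
    (∀ Φ : M →ₗ[k] M ⊗[k] H,
      cdot k H (cdot k H Φ ΔM)
        (TensorProduct.map LinearMap.id (HopfAlgebra.antipode (R := k)) ∘ₗ ΔM) = Φ ∧
      cdot k H (cdot k H Φ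
        (TensorProduct.map LinearMap.id (HopfAlgebra.antipode (R := k)) ∘ₗ ΔM)) ΔM = Φ) ∧
    (∀ Φ : M →ₗ[k] M ⊗[k] H,
      (∀ (s : S) (m : M), Φ (s • m) = s • Φ m) ↔
        (∀ (s : S) (m : M),
          cdot k H Φ ΔM (s • m) = mulMH k H S (cdot k H Φ ΔM m ⊗ₜ[k] ΔS s))) := by
  have part1 : ∀ Φ : M →ₗ[k] M ⊗[k] H,
      cdot k H (cdot k H Φ ΔM)
        (TensorProduct.map LinearMap.id (HopfAlgebra.antipode (R := k)) ∘ₗ ΔM) = Φ ∧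
      cdot k H (cdot k H Φ
        (TensorProduct.map LinearMap.id (HopfAlgebra.antipode (R := k)) ∘ₗ ΔM)) ΔM = Φ := by
    intro Φ
    have hk1 := TransAux.key1 k H ΔM hMcounit hMcoassoc
    have hk2 := TransAux.key2 k H ΔM hMcounit hMcoassoc
    constructor
    · rw [TransAux.cdot_assoc, hk2, TransAux.cdot_unit_right]
    · rw [TransAux.cdot_assoc, hk1, TransAux.cdot_unit_right]
  refine ⟨part1, ?_⟩
  intro Φ
  constructor
  · intro hΦ s m
    have e1 : cdot k H Φ ΔM (s • m) = TransAux.Fm k H Φ (ΔM (s • m)) := rfl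
    rw [e1, hHopfM s m, TransAux.forward_key k H Φ hΦ (ΔM m) (ΔS s)]
    rfl
  · intro hG s m
    have h1 := (part1 Φ).1
    have hG' : ∀ (s : S) (m : M),
        (cdot k H Φ ΔM) (s • m) =
          mulMH k H S ((cdot k H Φ ΔM) m ⊗ₜ ΔS.toLinearMap s) := by
      intro s m
      simpa using hG s m
    have hΦsm : Φ (s • m) = TransAux.Fm k H (cdot k H Φ ΔM)
        (TensorProduct.map LinearMap.id (HopfAlgebra.antipode (R := k)) (ΔM (s • m))) := by
      conv_lhs => rw [← h1]
      rfl
    have hΦm : Φ m = TransAux.Fm k H (cdot k H Φ ΔM)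
        (TensorProduct.map LinearMap.id (HopfAlgebra.antipode (R := k)) (ΔM m)) := by
      conv_lhs => rw [← h1]
      rfl
    have hsc : TensorProduct.map ΔS.toLinearMap LinearMap.id (ΔS s) =
        (TensorProduct.assoc k S H H).symm
          (TensorProduct.map LinearMap.id (Coalgebra.comul (R := k)) (ΔS s)) := by
      rw [LinearEquiv.eq_symm_apply]
      exact hScoassoc s
    rw [hΦsm, hHopfM s m,
      TransAux.L1 k H (cdot k H Φ ΔM) ΔS.toLinearMap hG' (ΔM m) (ΔS s),
      hsc, TransAux.L2 k H (cdot k H Φ ΔM) (ΔM m) (ΔS s), hScounit, ← hΦm]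
end

section
/- Let F : M → M ⊗ H be a k-linear map satisfying (CC3): (F ⊗ id_H) ∘ F = (id_M ⊗ Δ_H) ∘ F. Then d^2F ∘· δF = d^1F, where d^2F = F ⊗ η_H, d^1F = (id_M ⊗ Δ_H) ∘ F, δF = (id_M ⊗ T) ∘ (F ⊗ η_H) with T the flip of H ⊗ H, and the product on Hom(M, M⊗H⊗H) is Ψ ∘· Ψ' = (id_M ⊗ μ_H^{⊗2}) ∘ (id_M ⊗ χ_2) ∘ (Ψ ⊗ id_H^{⊗2}) ∘ Ψ' with χ_2((a_1⊗a_2)⊗(b_1⊗b_2)) = (a_1⊗b_1)⊗(a_2⊗b_2). Conversely, if F satisfies (id ⊗ ε_H)∘F = id and d^2F ∘· δF = d^1F, then F satisfies (CC3). -/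
open TensorProduct

variable (k : Type*) [CommRing k]
variable (H : Type*) [Ring H] [HopfAlgebra k H]
variable {M : Type*} [AddCommGroup M] [Module k M]

lemma aux_mul_one (x : M ⊗[k] H) :
    TensorProduct.map LinearMap.id (LinearMap.mul' k H)
      ((TensorProduct.assoc k M H H) (x ⊗ₜ[k] (1 : H))) = x := by
  induction x using TensorProduct.induction_on with
  | zero => simp
  | add a b ha hb => simp [TensorProduct.add_tmul, ha, hb]
  | tmul a b => simp

lemma key_cdot2 (F : M →ₗ[k] M ⊗[k] H) :
    cdot2 k H (D2 k H F)
        ((TensorProduct.assoc k M H H).symm.toLinearMap ∘ₗ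
          TensorProduct.map LinearMap.id (TensorProduct.comm k H H).toLinearMap ∘ₗ
          (TensorProduct.assoc k M H H).toLinearMap ∘ₗ D2 k H F) =
      TensorProduct.map F LinearMap.id ∘ₗ F := by
  ext m
  simp only [cdot2, D2, LinearMap.comp_apply, LinearMap.flip_apply,
    TensorProduct.mk_apply]
  induction F m using TensorProduct.induction_on with
  | zero => simp
  | add x y hx hy => simp_all [TensorProduct.tmul_add, TensorProduct.add_tmul]
  | tmul m0 h =>
    simp only [TensorProduct.assoc_tmul, TensorProduct.map_tmul,
      TensorProduct.comm_tmul, TensorProduct.assoc_symm_tmul, LinearMap.id_apply,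
      LinearMap.flip_apply, TensorProduct.mk_apply,
      TensorProduct.tensorTensorTensorComm_tmul, LinearMap.mul'_apply, one_mul,
      LinearMap.comp_apply, LinearEquiv.coe_coe]
    rw [aux_mul_one]

/-- if `F` satisfies (CC3) then `d²F ∘· δF = d¹F`, where
`δF = (id_M ⊗ T) ∘ (F ⊗ η_H)`; conversely, if `F` satisfies the counit condition and
`d²F ∘· δF = d¹F`, then `F` satisfies (CC3). -/
theorem cc3_iff_deformed_cocycle (F : M →ₗ[k] M ⊗[k] H) :
    (((TensorProduct.assoc k M H H).toLinearMap ∘ₗ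
        TensorProduct.map F LinearMap.id ∘ₗ F =
      TensorProduct.map LinearMap.id (Coalgebra.comul (R := k)) ∘ₗ F) →
      cdot2 k H (D2 k H F)
        ((TensorProduct.assoc k M H H).symm.toLinearMap ∘ₗ
          TensorProduct.map LinearMap.id (TensorProduct.comm k H H).toLinearMap ∘ₗ
          (TensorProduct.assoc k M H H).toLinearMap ∘ₗ D2 k H F) = D1 k H F) ∧
    ((((TensorProduct.rid k M).toLinearMap ∘ₗ
        TensorProduct.map LinearMap.id (Coalgebra.counit (R := k)) ∘ₗ F = LinearMap.id) ∧
      cdot2 k H (D2 k H F)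
        ((TensorProduct.assoc k M H H).symm.toLinearMap ∘ₗ
          TensorProduct.map LinearMap.id (TensorProduct.comm k H H).toLinearMap ∘ₗ
          (TensorProduct.assoc k M H H).toLinearMap ∘ₗ D2 k H F) = D1 k H F) →
      (TensorProduct.assoc k M H H).toLinearMap ∘ₗ
          TensorProduct.map F LinearMap.id ∘ₗ F =
        TensorProduct.map LinearMap.id (Coalgebra.comul (R := k)) ∘ₗ F) := by
  have hkey := key_cdot2 k H F
  constructor
  · intro hcc3
    rw [hkey, D1, LinearEquiv.eq_toLinearMap_symm_comp]
    exact hcc3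
  · rintro ⟨-, hc⟩
    rw [hkey, D1, LinearEquiv.eq_toLinearMap_symm_comp] at hc
    exact hc
end
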